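/- (Tweedie's formula) Let Y = X + N where N ~ N(0, σ_N²) is independent of X and X has a density. Then for all y ∈ ℝ, E[X | Y = y] = y + σ_N² f_Y'(y)/f_Y(y), where f_Y is the marginal density of Y. -/

import Mathlib

open Real Set MeasureTheory Filter

/-- Standard normal density. -/
noncomputable def stdGaussPDF (x : ℝ) : ℝ := (Real.sqrt (2 * Real.pi))⁻¹ * Real.exp (-x ^ 2 / 2)

/-- Gaussian conditional density `f_{Y|X=x}(y)` for the mechanism `Y = X + N`. -/
noncomputable def condPDF (σN x y : ℝ) : ℝ := (1 / σN) * stdGaussPDF ((y - x) / σN)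

/-- Marginal density of `Y = X + N`. -/
noncomputable def margPDF (σN : ℝ) (fX : ℝ → ℝ) (y : ℝ) : ℝ := ∫ x, fX x * condPDF σN x y

/-- Posterior mean `E[X | Y = y]`. -/
noncomputable def postMean (σN : ℝ) (fX : ℝ → ℝ) (y : ℝ) : ℝ :=
  (∫ x, x * fX x * condPDF σN x y) / margPDF σN fX y

lemma sqrt2pi_pos : 0 < Real.sqrt (2 * Real.pi) :=
  Real.sqrt_pos.mpr (by positivity)

lemma stdGauss_pos (x : ℝ) : 0 < stdGaussPDF x := by
  unfold stdGaussPDF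
  positivity

lemma condPDF_pos {σN : ℝ} (hσ : 0 < σN) (x y : ℝ) : 0 < condPDF σN x y := by
  unfold condPDF
  have := stdGauss_pos ((y - x) / σN)
  positivity

lemma abs_mul_exp_le (u : ℝ) : |u| * Real.exp (-u ^ 2 / 2) ≤ 1 := by
  have h1 : |u| ≤ Real.exp (u ^ 2 / 2) := by
    calc |u| ≤ 1 + u ^ 2 / 2 := by
          nlinarith [sq_nonneg (|u| - 1), sq_abs u, abs_nonneg u]
      _ ≤ Real.exp (u ^ 2 / 2) := by
          have := Real.add_one_le_exp (u ^ 2 / 2); linarith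
  have h2 : Real.exp (-u ^ 2 / 2) = (Real.exp (u ^ 2 / 2))⁻¹ := by
    rw [← Real.exp_neg]; ring_nf
  rw [h2]
  rw [mul_inv_le_iff₀ (Real.exp_pos _), one_mul]
  exact h1

lemma stdGauss_le (x : ℝ) : stdGaussPDF x ≤ (Real.sqrt (2 * Real.pi))⁻¹ := by
  unfold stdGaussPDF
  have h : Real.exp (-x ^ 2 / 2) ≤ 1 := by
    rw [Real.exp_le_one_iff]; nlinarith [sq_nonneg x]
  have := sqrt2pi_pos
  nlinarith [inv_pos.mpr sqrt2pi_pos]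

lemma condPDF_le {σN : ℝ} (hσ : 0 < σN) (x y : ℝ) :
    condPDF σN x y ≤ 1 / (σN * Real.sqrt (2 * Real.pi)) := by
  unfold condPDF
  have h := stdGauss_le ((y - x) / σN)
  calc (1 / σN) * stdGaussPDF ((y - x) / σN) ≤ (1 / σN) * (Real.sqrt (2 * Real.pi))⁻¹ := by
        exact mul_le_mul_of_nonneg_left h (by positivity)
    _ = 1 / (σN * Real.sqrt (2 * Real.pi)) := by
        rw [one_div, one_div, mul_inv]

/-- key bound: `|x - y| * condPDF ≤ 1/√(2π)` (scaled). -/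
lemma abs_sub_mul_condPDF_le {σN : ℝ} (hσ : 0 < σN) (x y : ℝ) :
    |x - y| * condPDF σN x y ≤ (Real.sqrt (2 * Real.pi))⁻¹ := by
  unfold condPDF stdGaussPDF
  set u := (y - x) / σN with hu
  have hxy : |x - y| = σN * |u| := by
    rw [hu, abs_div, abs_of_pos hσ, mul_div_cancel₀]
    · rw [abs_sub_comm]
    · exact ne_of_gt hσ
  rw [hxy]
  have h := abs_mul_exp_le u
  have hs := sqrt2pi_pos
  have : σN * |u| * (1 / σN * ((Real.sqrt (2 * Real.pi))⁻¹ * Real.exp (-u ^ 2 / 2)))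
      = (|u| * Real.exp (-u ^ 2 / 2)) * (Real.sqrt (2 * Real.pi))⁻¹ := by
    field_simp
  rw [this]
  calc (|u| * Real.exp (-u ^ 2 / 2)) * (Real.sqrt (2 * Real.pi))⁻¹
      ≤ 1 * (Real.sqrt (2 * Real.pi))⁻¹ := by
        exact mul_le_mul_of_nonneg_right h (by positivity)
    _ = (Real.sqrt (2 * Real.pi))⁻¹ := one_mul _

lemma condPDF_continuous {σN : ℝ} (x : ℝ) : Continuous (fun y => condPDF σN x y) := by
  unfold condPDF stdGaussPDF
  continuity

lemma condPDF_continuous_x {σN : ℝ} (y : ℝ) : Continuous (fun x => condPDF σN x y) := by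
  unfold condPDF stdGaussPDF
  continuity

lemma hasDerivAt_condPDF {σN : ℝ} (hσ : 0 < σN) (x y : ℝ) :
    HasDerivAt (fun y => condPDF σN x y) ((x - y) / σN ^ 2 * condPDF σN x y) y := by
  have hσ' : σN ≠ 0 := ne_of_gt hσ
  have h1 : HasDerivAt (fun y : ℝ => (y - x) / σN) (1 / σN) y := by
    simpa using ((hasDerivAt_id y).sub_const x).div_const σN
  have h2 : HasDerivAt (fun y : ℝ => -((y - x) / σN) ^ 2 / 2)
      (-((y - x) / σN) * (1 / σN)) y := by
    have := ((h1.pow 2).neg.div_const 2)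
    refine this.congr_deriv ?_
    norm_num
    ring
  have h3 : HasDerivAt (fun y : ℝ => Real.exp (-((y - x) / σN) ^ 2 / 2))
      (Real.exp (-((y - x) / σN) ^ 2 / 2) * (-((y - x) / σN) * (1 / σN))) y := h2.exp
  have h4 := (h3.const_mul ((Real.sqrt (2 * Real.pi))⁻¹)).const_mul (1 / σN)
  refine h4.congr_deriv ?_
  unfold condPDF stdGaussPDF
  field_simp
  ring

/-- Tweedie's formula: for the Gaussian noise channel `Y = X + N`,
`E[X | Y = y] = y + σ_N² f_Y'(y)/f_Y(y)`. -/
theorem tweedie_formula (σN : ℝ) (hσN : 0 < σN) (fX : ℝ → ℝ)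
    (hmeas : Measurable fX) (hnn : ∀ x, 0 ≤ fX x) (hint : ∫ x, fX x = 1) :
    ∀ y : ℝ, postMean σN fX y
      = y + σN ^ 2 * deriv (margPDF σN fX) y / margPDF σN fX y := by
  intro y
  have hσ' : σN ≠ 0 := ne_of_gt hσN
  have hs2pi := sqrt2pi_pos
  -- fX is integrable
  have hfXint : Integrable fX := by
    by_contra h
    rw [integral_undef h] at hint
    norm_num at hint
  -- integrability of fX * condPDF at any y'
  have hM_int : ∀ y' : ℝ, Integrable (fun x => fX x * condPDF σN x y') := by
    intro y'
    have := (hfXint.bdd_mul (condPDF_continuous_x (σN := σN) y').aestronglyMeasurable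
      (c := 1 / (σN * Real.sqrt (2 * Real.pi))) (Filter.Eventually.of_forall fun x => by
        rw [Real.norm_eq_abs, abs_of_pos (condPDF_pos hσN x y')]
        exact condPDF_le hσN x y'))
    exact this.congr (Filter.Eventually.of_forall fun x => mul_comm _ _)
  -- integrability of x * fX * condPDF
  have hI_int : Integrable (fun x => x * fX x * condPDF σN x y) := by
    have hbd : ∀ x : ℝ, ‖x * condPDF σN x y‖ ≤ (Real.sqrt (2 * Real.pi))⁻¹ + |y| * (1 / (σN * Real.sqrt (2 * Real.pi))) := by
      intro x
      have hpos := condPDF_pos hσN x y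
      rw [Real.norm_eq_abs, abs_mul, abs_of_pos hpos]
      have h1 : |x| ≤ |x - y| + |y| := by
        calc |x| = |(x - y) + y| := by ring_nf
          _ ≤ |x - y| + |y| := abs_add_le _ _
      calc |x| * condPDF σN x y ≤ (|x - y| + |y|) * condPDF σN x y :=
            mul_le_mul_of_nonneg_right h1 (le_of_lt hpos)
        _ = |x - y| * condPDF σN x y + |y| * condPDF σN x y := by ring
        _ ≤ (Real.sqrt (2 * Real.pi))⁻¹ + |y| * (1 / (σN * Real.sqrt (2 * Real.pi))) := by
            gcongr
            · exact abs_sub_mul_condPDF_le hσN x y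
            · exact condPDF_le hσN x y
    have hcont : Continuous (fun x : ℝ => x * condPDF σN x y) :=
      continuous_id.mul (condPDF_continuous_x y)
    have := (hfXint.bdd_mul hcont.aestronglyMeasurable
      (Filter.Eventually.of_forall hbd))
    exact this.congr (Filter.Eventually.of_forall fun x => by ring)
  -- positivity of margPDF
  have hMpos : 0 < margPDF σN fX y := by
    unfold margPDF
    rw [integral_pos_iff_support_of_nonneg
      (fun x => mul_nonneg (hnn x) (le_of_lt (condPDF_pos hσN x y))) (hM_int y)]
    have hsupp : Function.support (fun x => fX x * condPDF σN x y) = Function.support fX := by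
      ext x
      simp only [Function.mem_support]
      constructor
      · intro h hfx; exact h (by rw [hfx]; ring)
      · intro h hc; exact h (by
          rcases mul_eq_zero.mp hc with h1 | h2
          · exact h1
          · exact absurd h2 (ne_of_gt (condPDF_pos hσN x y)))
    rw [hsupp]
    have : 0 < ∫ x, fX x := by rw [hint]; norm_num
    exact (integral_pos_iff_support_of_nonneg hnn hfXint).mp this
  -- the derivative
  have hderiv : HasDerivAt (margPDF σN fX)
      (∫ x, fX x * ((x - y) / σN ^ 2 * condPDF σN x y)) y := by
    have key := hasDerivAt_integral_of_dominated_loc_of_deriv_le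
      (F := fun y' x => fX x * condPDF σN x y')
      (F' := fun y' x => fX x * ((x - y') / σN ^ 2 * condPDF σN x y'))
      (bound := fun x => fX x * (1 / (σN ^ 2 * Real.sqrt (2 * Real.pi))))
      (x₀ := y) (μ := volume) (Metric.ball_mem_nhds y one_pos)
      (Filter.Eventually.of_forall fun y' => (hM_int y').aestronglyMeasurable)
      (hM_int y)
      ?_ ?_ ?_ ?_
    · exact key.2
    · -- measurability of F' y
      have hcont : Continuous (fun x : ℝ => (x - y) / σN ^ 2 * condPDF σN x y) :=
        ((continuous_id.sub continuous_const).div_const _).mul (condPDF_continuous_x y)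
      exact (hmeas.aestronglyMeasurable.mul hcont.aestronglyMeasurable)
    · -- bound
      refine Filter.Eventually.of_forall fun x => fun y' _ => ?_
      rw [Real.norm_eq_abs, abs_mul, abs_of_nonneg (hnn x)]
      refine mul_le_mul_of_nonneg_left ?_ (hnn x)
      rw [abs_mul, abs_div, abs_of_pos (condPDF_pos hσN x y')]
      have h1 : |x - y'| * condPDF σN x y' ≤ (Real.sqrt (2 * Real.pi))⁻¹ :=
        abs_sub_mul_condPDF_le hσN x y'
      have h2 : |σN ^ 2| = σN ^ 2 := abs_of_pos (by positivity)
      rw [h2]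
      rw [div_mul_eq_mul_div, div_le_iff₀ (by positivity : (0:ℝ) < σN ^ 2)]
      calc |x - y'| * condPDF σN x y' ≤ (Real.sqrt (2 * Real.pi))⁻¹ := h1
        _ = 1 / (σN ^ 2 * Real.sqrt (2 * Real.pi)) * σN ^ 2 := by field_simp
    · -- bound integrable
      exact hfXint.mul_const _
    · -- differentiability
      refine Filter.Eventually.of_forall fun x => fun y' _ => ?_
      exact (hasDerivAt_condPDF hσN x y').const_mul (fX x)
  -- rewrite the derivative integral
  have hI1 := hI_int
  have hM := hM_int y
  have hrw : (∫ x, fX x * ((x - y) / σN ^ 2 * condPDF σN x y))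
      = (1 / σN ^ 2) * ((∫ x, x * fX x * condPDF σN x y) - y * margPDF σN fX y) := by
    have : (fun x => fX x * ((x - y) / σN ^ 2 * condPDF σN x y))
        = fun x => (1 / σN ^ 2) * (x * fX x * condPDF σN x y - y * (fX x * condPDF σN x y)) := by
      funext x
      field_simp
    rw [this, MeasureTheory.integral_const_mul]
    congr 1
    rw [MeasureTheory.integral_sub hI1 (hM.const_mul y)]
    rw [MeasureTheory.integral_const_mul]
    unfold margPDF
    rfl
  have hD : deriv (margPDF σN fX) y
      = (1 / σN ^ 2) * ((∫ x, x * fX x * condPDF σN x y) - y * margPDF σN fX y) := by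
    rw [hderiv.deriv, hrw]
  rw [hD]
  unfold postMean
  have hMne : margPDF σN fX y ≠ 0 := ne_of_gt hMpos
  field_simp
  ring
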